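/- arXiv:2411.05553 — 3 statements merged into one kernel-verified Lean document; each statement's English description precedes it below -/
import Mathlib

section
/- Let s ∈ ℕ with s ≥ 1 and let c satisfy 1/(s+1) < c < 1/s. Define σ(α,m) = (1 - αc - (1-α)/m)^m and δ(α) = σ(α, s+1) - σ(α, s) for α ∈ [0,1]. Then δ is strictly decreasing on [0,1], δ(0) = (1 - 1/(s+1))^{s+1} - (1 - 1/s)^s > 0, and δ(1) = (1-c)^{s+1} - (1-c)^s < 0; consequently there exists a unique α* ∈ (0,1) with σ(α*, s) = σ(α*, s+1). -/
/-! The two bases `1 - αc - (1 - α)/m` are affine in `α`; since `1/(s+1) < c < 1/s`, the one with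
`m = s + 1` decreases and the one with `m = s` increases, and both stay nonnegative on `[0, 1]`.
Hence `δ` is strictly decreasing. Its sign change from `δ 0 > 0` (monotonicity of `(1 - 1/n)^n`,
via Bernoulli's inequality) to `δ 1 < 0` gives the root by the intermediate value theorem, and
strict monotonicity makes it unique. -/

open Set

theorem one_sub_inv_pow_lt_succ {n : ℕ} (hn : 1 ≤ n) :
    (1 - 1 / (n : ℝ)) ^ n < (1 - 1 / (n + 1 : ℝ)) ^ (n + 1) := by
  obtain rfl | hn2 := hn.eq_or_lt
  · norm_num
  have hn2 : (2 : ℝ) ≤ n := by exact_mod_cast hn2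
  set a : ℝ := 1 - 1 / (n : ℝ)
  set b : ℝ := 1 - 1 / (n + 1 : ℝ)
  have ha : 0 < a := by
    have : 1 / (n : ℝ) < 1 := by rw [div_lt_one] <;> linarith
    linarith
  have hb₀ : 0 < b := by
    have : 1 / (n + 1 : ℝ) < 1 := by rw [div_lt_one] <;> linarith
    linarith
  have hb_eq : b * (1 + n * (b / a - 1)) = 1 + 1 / ((n - 1) * (n + 1) ^ 2) := by
    have : (n : ℝ) - 1 ≠ 0 := by linarith
    simp only [a, b]
    field_simp
    ring
  have hb : 1 < b * (1 + n * (b / a - 1)) := by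
    rw [hb_eq, lt_add_iff_pos_right]
    exact div_pos one_pos (mul_pos (by linarith) (by positivity))
  have hbern : 1 + n * (b / a - 1) ≤ (b / a) ^ n :=
    one_add_mul_sub_le_pow (by linarith [div_pos hb₀ ha]) n
  calc a ^ n < a ^ n * (b * (1 + n * (b / a - 1))) := lt_mul_of_one_lt_right (pow_pos ha n) hb
    _ ≤ a ^ n * (b * (b / a) ^ n) := by gcongr
    _ = b ^ (n + 1) := by rw [div_pow]; field_simp; ring

section AffineBase

variable {c m : ℝ} {k : ℕ}

theorem one_sub_mul_sub_div_eq (c m α : ℝ) :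
    1 - α * c - (1 - α) / m = (1 - α) * (1 - 1 / m) + α * (1 - c) := by
  ring

theorem one_sub_mul_sub_div_nonneg (hm : 1 ≤ m) (hc : c ≤ 1) {α : ℝ} (hα : α ∈ Icc 0 1) :
    0 ≤ 1 - α * c - (1 - α) / m := by
  have hm' : 1 / m ≤ 1 := by rw [div_le_one] <;> linarith
  rw [one_sub_mul_sub_div_eq]
  exact add_nonneg (mul_nonneg (by linarith [hα.2]) (by linarith))
    (mul_nonneg hα.1 (by linarith))

theorem strictAntiOn_one_sub_mul_sub_div_pow (hm : 1 ≤ m) (hcm : 1 / m < c) (hc : c ≤ 1)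
    (hk : k ≠ 0) :
    StrictAntiOn (fun α : ℝ => (1 - α * c - (1 - α) / m) ^ k) (Icc 0 1) := by
  intro x _ y hy hxy
  have hslope : (1 - x * c - (1 - x) / m) - (1 - y * c - (1 - y) / m) =
      (y - x) * (c - 1 / m) := by
    ring
  refine pow_lt_pow_left₀ ?_ (one_sub_mul_sub_div_nonneg hm hc hy) hk
  linarith [mul_pos (sub_pos.2 hxy) (sub_pos.2 hcm)]

theorem strictMonoOn_one_sub_mul_sub_div_pow (hm : 1 ≤ m) (hcm : c < 1 / m) (hk : k ≠ 0) :
    StrictMonoOn (fun α : ℝ => (1 - α * c - (1 - α) / m) ^ k) (Icc 0 1) := by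
  have hc : c ≤ 1 := hcm.le.trans (by rw [div_le_one] <;> linarith)
  intro x hx y _ hxy
  have hslope : (1 - y * c - (1 - y) / m) - (1 - x * c - (1 - x) / m) =
      (y - x) * (1 / m - c) := by
    ring
  refine pow_lt_pow_left₀ ?_ (one_sub_mul_sub_div_nonneg hm hc hx) hk
  linarith [mul_pos (sub_pos.2 hxy) (sub_pos.2 hcm)]

end AffineBase

theorem StrictAntiOn.sub_strictMonoOn {α β : Type*} [Preorder α] [AddCommGroup β]
    [PartialOrder β] [IsOrderedAddMonoid β] {f g : α → β} {s : Set α} (hf : StrictAntiOn f s)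
    (hg : StrictMonoOn g s) : StrictAntiOn (fun x => f x - g x) s :=
  fun _ hx _ hy hxy => sub_lt_sub (hf hx hy hxy) (hg hx hy hxy)

theorem existsUnique_mem_Ioo_eq_zero_of_strictAntiOn {f : ℝ → ℝ} {a b : ℝ} (hab : a ≤ b)
    (hcont : ContinuousOn f (Icc a b)) (hanti : StrictAntiOn f (Icc a b)) (ha : 0 < f a)
    (hb : f b < 0) : ∃! x, x ∈ Ioo a b ∧ f x = 0 := by
  obtain ⟨x, hx, hfx⟩ := intermediate_value_Ioo' hab hcont ⟨hb, ha⟩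
  exact ⟨x, ⟨hx, hfx⟩, fun y ⟨hy, hfy⟩ =>
    hanti.injOn (Ioo_subset_Icc_self hy) (Ioo_subset_Icc_self hx) (hfy.trans hfx.symm)⟩

theorem stmt4 (s : ℕ) (hs : 1 ≤ s) (c : ℝ)
    (hc : 1 / (s + 1 : ℝ) < c ∧ c < 1 / (s : ℝ)) :
    StrictAntiOn
      (fun α : ℝ =>
        (1 - α * c - (1 - α) / (s + 1 : ℝ)) ^ (s + 1) -
          (1 - α * c - (1 - α) / (s : ℝ)) ^ s)
      (Set.Icc 0 1) ∧
    (1 - (0 : ℝ) * c - (1 - 0) / (s + 1 : ℝ)) ^ (s + 1) -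
        (1 - (0 : ℝ) * c - (1 - 0) / (s : ℝ)) ^ s =
      (1 - 1 / (s + 1 : ℝ)) ^ (s + 1) - (1 - 1 / (s : ℝ)) ^ s ∧
    0 < (1 - 1 / (s + 1 : ℝ)) ^ (s + 1) - (1 - 1 / (s : ℝ)) ^ s ∧
    (1 - (1 : ℝ) * c - (1 - 1) / (s + 1 : ℝ)) ^ (s + 1) -
        (1 - (1 : ℝ) * c - (1 - 1) / (s : ℝ)) ^ s =
      (1 - c) ^ (s + 1) - (1 - c) ^ s ∧
    (1 - c) ^ (s + 1) - (1 - c) ^ s < 0 ∧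
    ∃! α : ℝ, α ∈ Set.Ioo (0 : ℝ) 1 ∧
      (1 - α * c - (1 - α) / (s : ℝ)) ^ s =
        (1 - α * c - (1 - α) / (s + 1 : ℝ)) ^ (s + 1) := by
  obtain ⟨hc₁, hc₂⟩ := hc
  have hs' : (1 : ℝ) ≤ s := by exact_mod_cast hs
  have hc₀ : 0 < c := (by positivity : (0 : ℝ) < 1 / (s + 1 : ℝ)).trans hc₁
  have hc_lt_one : c < 1 := hc₂.trans_le (by rw [div_le_one] <;> linarith)
  have hanti := (strictAntiOn_one_sub_mul_sub_div_pow (k := s + 1) (by linarith) hc₁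
    hc_lt_one.le s.succ_ne_zero).sub_strictMonoOn
    (strictMonoOn_one_sub_mul_sub_div_pow (k := s) hs' hc₂ (by omega))
  have hδ₀ := sub_pos.2 (one_sub_inv_pow_lt_succ hs)
  have hδ₁ : (1 - c) ^ (s + 1) - (1 - c) ^ s < 0 :=
    sub_neg.2 (pow_lt_pow_right_of_lt_one₀ (by linarith) (by linarith) s.lt_succ_self)
  refine ⟨hanti, by norm_num, hδ₀, by norm_num, hδ₁, ?_⟩
  have hroot := existsUnique_mem_Ioo_eq_zero_of_strictAntiOn zero_le_one
    (by fun_prop) hanti (by simpa using hδ₀) (by simpa using hδ₁)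
  exact (existsUnique_congr fun α => and_congr_right' (sub_eq_zero.trans eq_comm)).1 hroot
end

section
/- For every integer s ≥ 2 and c = 1/s, with α* = 1 - (s-1)·ln(s/(s-1)), the maximum over integers m ≥ 1 of (1 - α*c - (1-α*)/m)^m equals (1 - 1/s)^s = (1-c)^{1/c}. -/
/-!
Write `t m = A - B / m`, so that `σ(α*, m) = t m ^ m` with `A = 1 - α* c`, `B = 1 - α*`. The tangent
line of `log` at `τ = t s` gives `m log (t m) ≤ m (log τ + t m / τ - 1)`, and the right-hand side
equals `-B / τ` for every `m` exactly when `log τ + A / τ = 1`, which is the first-order condition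
`∂ₘ (m log (t m)) = 0` at `m = s`. The choice of `α*` makes this condition hold with `τ = 1 - 1/s`.
-/

theorem sub_div_rpow_le_of_log_add_div_eq_one {A B s m : ℝ} (hs : 0 < s) (hτ : 0 < A - B / s)
    (hfoc : Real.log (A - B / s) + A / (A - B / s) = 1) (hm : 0 < m) (ht : 0 < A - B / m) :
    (A - B / m) ^ m ≤ (A - B / s) ^ s := by
  set τ := A - B / s
  have tangent : Real.log (A - B / m) ≤ Real.log τ + ((A - B / m) / τ - 1) := by
    have := Real.log_le_sub_one_of_pos (div_pos ht hτ)
    rwa [Real.log_div ht.ne' hτ.ne', sub_le_iff_le_add'] at this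
  have envelope : ∀ x ≠ 0, x * (Real.log τ + ((A - B / x) / τ - 1)) = -(B / τ) := by
    intro x hx
    rw [show Real.log τ = 1 - A / τ by linarith]
    field_simp
    ring
  rw [Real.rpow_def_of_pos ht, Real.rpow_def_of_pos hτ, Real.exp_le_exp]
  calc Real.log (A - B / m) * m ≤ (Real.log τ + ((A - B / m) / τ - 1)) * m :=
        mul_le_mul_of_nonneg_right tangent hm.le
    _ = -(B / τ) := by rw [mul_comm, envelope m hm.ne']
    _ = Real.log τ * s := by
        rw [mul_comm, ← envelope s hs.ne', div_self hτ.ne', sub_self, add_zero]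

noncomputable def alphaStar (s : ℝ) : ℝ := 1 - (s - 1) * Real.log (s / (s - 1))

theorem log_div_sub_one_pos {s : ℝ} (hs : 1 < s) : 0 < Real.log (s / (s - 1)) :=
  Real.log_pos ((one_lt_div (by linarith)).2 (by linarith))

theorem alphaStar_lt_one {s : ℝ} (hs : 1 < s) : alphaStar s < 1 := by
  have := mul_pos (sub_pos.2 hs) (log_div_sub_one_pos hs)
  unfold alphaStar; linarith

theorem alphaStar_pos {s : ℝ} (hs : 1 < s) : 0 < alphaStar s := by
  have hs1 : 0 < s - 1 := by linarith
  have hlog := Real.log_lt_sub_one_of_pos (by positivity : 0 < s / (s - 1))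
    ((one_lt_div hs1).2 (by linarith)).ne'
  have hprod : (s - 1) * (s / (s - 1) - 1) = 1 := by field_simp; ring
  have := mul_lt_mul_of_pos_left hlog hs1
  unfold alphaStar; linarith

theorem log_add_div_eq_one_alphaStar {s : ℝ} (hs : 1 < s) :
    Real.log (1 - 1 / s) + (1 - alphaStar s / s) / (1 - 1 / s) = 1 := by
  have hs0 : s ≠ 0 := by linarith
  have hs1 : s - 1 ≠ 0 := by linarith
  rw [show 1 - 1 / s = (s / (s - 1))⁻¹ by field_simp, Real.log_inv, alphaStar]
  field_simp
  ring

theorem one_sub_mul_sub_div_pos {α c m : ℝ} (hα0 : 0 < α) (hα1 : α < 1) (hc : c < 1) (hm : 1 ≤ m) :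
    0 < 1 - α * c - (1 - α) / m := by
  have h1 : (1 - α) / m ≤ 1 - α := div_le_self (by linarith) hm
  nlinarith

theorem stmt6 (s : ℕ) (hs : 2 ≤ s) (c : ℝ) (hc : c = 1 / (s : ℝ))
    (α : ℝ) (hα : α = 1 - ((s : ℝ) - 1) * Real.log ((s : ℝ) / ((s : ℝ) - 1))) :
    IsGreatest
      {v : ℝ | ∃ m : ℕ, 1 ≤ m ∧ v = (1 - α * c - (1 - α) / (m : ℝ)) ^ m}
      ((1 - 1 / (s : ℝ)) ^ s) ∧
    (1 - 1 / (s : ℝ)) ^ s = (1 - c) ^ (1 / c : ℝ) := by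
  have hs1 : (1 : ℝ) < s := by exact_mod_cast hs
  replace hα : α = alphaStar s := hα
  have hbase : 1 - α * c - (1 - α) / s = 1 - 1 / s := by
    rw [hc]; field_simp; ring
  refine ⟨⟨⟨s, by omega, by rw [hbase]⟩, ?_⟩, by rw [hc, one_div_one_div, Real.rpow_natCast]⟩
  have hτ : 0 < 1 - 1 / (s : ℝ) := by
    rw [sub_pos, div_lt_one (by linarith)]; exact hs1
  rintro v ⟨m, hm, rfl⟩
  have hfoc : Real.log (1 - 1 / s) + (1 - α * c) / (1 - 1 / s) = 1 := by
    rw [hc, mul_one_div, hα]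
    exact log_add_div_eq_one_alphaStar hs1
  have hpos : 0 < 1 - α * c - (1 - α) / m := by
    rw [hα]
    exact one_sub_mul_sub_div_pos (alphaStar_pos hs1) (alphaStar_lt_one hs1)
      (by linarith) (by exact_mod_cast hm)
  have := sub_div_rpow_le_of_log_add_div_eq_one (s := s) (m := m) (by linarith) (by rwa [hbase])
    (by rwa [hbase]) (by positivity) hpos
  simpa only [Real.rpow_natCast, hbase] using this
end

section
/- The function c ↦ 1 - (1-c)^{1/c} on (0,1) satisfies: (a) it is strictly greater than max{c, 1 - 1/e} for every c ∈ (0,1), (b) its limit as c → 0⁺ equals 1 - 1/e, and (c) its limit as c → 1⁻ equals 1. -/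
/-!
Since `log (1 - c) < -c < 0`, the exponent `log (1 - c) / c` is below both `-1` and `log (1 - c)`,
which gives the two lower bounds. The exponent is the difference
quotient of `c ↦ log (1 - c)` at `0`, so it tends to the derivative `-1` as `c → 0`, and it tends
to `-∞` as `c → 1`.
-/

open Real Filter Topology Set

namespace Real

theorem log_one_sub_lt_neg {c : ℝ} (hc0 : c ≠ 0) (hc1 : c < 1) : log (1 - c) < -c := by
  have := log_lt_sub_one_of_pos (sub_pos.2 hc1) (by simpa using hc0)
  linarith

theorem log_one_sub_div_lt_neg_one {c : ℝ} (hc0 : 0 < c) (hc1 : c < 1) :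
    log (1 - c) / c < -1 := by
  rw [div_lt_iff₀ hc0]
  linarith [log_one_sub_lt_neg hc0.ne' hc1]

theorem log_one_sub_div_lt_log_one_sub {c : ℝ} (hc0 : 0 < c) (hc1 : c < 1) :
    log (1 - c) / c < log (1 - c) := by
  have hlog : log (1 - c) < 0 := by linarith [log_one_sub_lt_neg hc0.ne' hc1]
  rw [div_lt_iff₀ hc0]
  nlinarith

theorem tendsto_log_one_sub_div_nhdsNE_zero :
    Tendsto (fun c => log (1 - c) / c) (𝓝[≠] 0) (𝓝 (-1)) := by
  have hderiv : HasDerivAt (fun c => log (1 - c)) (-1) 0 := by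
    simpa using ((hasDerivAt_id (0 : ℝ)).const_sub 1).log (by norm_num)
  refine (hasDerivAt_iff_tendsto_slope.1 hderiv).congr fun c => ?_
  simp [slope_def_field]

theorem tendsto_log_one_sub_nhdsLT_one : Tendsto (fun c => log (1 - c)) (𝓝[<] 1) atBot := by
  refine tendsto_log_nhdsGT_zero.comp ?_
  have hmaps : MapsTo (fun c : ℝ => 1 - c) (Iio 1) (Ioi 0) := fun _ hc => sub_pos.2 (mem_Iio.1 hc)
  have h := ((continuous_sub_left (1 : ℝ)).continuousWithinAt (x := 1)).tendsto_nhdsWithin hmaps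
  rwa [sub_self] at h

theorem tendsto_log_one_sub_div_nhdsLT_one :
    Tendsto (fun c => log (1 - c) / c) (𝓝[<] 1) atBot := by
  refine tendsto_atBot_mono' _ ?_ tendsto_log_one_sub_nhdsLT_one
  filter_upwards [Ioo_mem_nhdsLT one_pos] with c hc
  exact (log_one_sub_div_lt_log_one_sub hc.1 hc.2).le

end Real

theorem stmt8 :
    (∀ c ∈ Set.Ioo (0 : ℝ) 1,
      1 - Real.exp (Real.log (1 - c) / c) > max c (1 - 1 / Real.exp 1)) ∧
    Filter.Tendsto (fun c : ℝ => 1 - Real.exp (Real.log (1 - c) / c))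
      (nhdsWithin 0 (Set.Ioo (0 : ℝ) 1)) (nhds (1 - 1 / Real.exp 1)) ∧
    Filter.Tendsto (fun c : ℝ => 1 - Real.exp (Real.log (1 - c) / c))
      (nhdsWithin 1 (Set.Ioo (0 : ℝ) 1)) (nhds 1) := by
  refine ⟨fun c ⟨hc0, hc1⟩ => max_lt ?_ ?_, ?_, ?_⟩
  · have := exp_lt_exp.2 (log_one_sub_div_lt_log_one_sub hc0 hc1)
    rw [exp_log (sub_pos.2 hc1)] at this
    linarith
  · have := exp_lt_exp.2 (log_one_sub_div_lt_neg_one hc0 hc1)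
    rw [exp_neg, ← one_div] at this
    linarith
  · have hexp : Tendsto (fun c => exp (log (1 - c) / c)) (𝓝[Ioo 0 1] 0) (𝓝 (exp (-1))) :=
      (continuous_exp.tendsto _).comp <| tendsto_log_one_sub_div_nhdsNE_zero.mono_left <|
        nhdsWithin_mono _ fun c hc => hc.1.ne'
    simpa [exp_neg, one_div] using tendsto_const_nhds.sub hexp
  · have hexp : Tendsto (fun c => exp (log (1 - c) / c)) (𝓝[Ioo 0 1] 1) (𝓝 0) :=
      tendsto_exp_atBot.comp <| tendsto_log_one_sub_div_nhdsLT_one.mono_left <|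
        nhdsWithin_mono _ Ioo_subset_Iio_self
    simpa using tendsto_const_nhds.sub hexp
end
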